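/- arXiv:1801.02749 — 4 statements merged into one kernel-verified Lean document; each statement's English description precedes it below -/
import Mathlib

section
/- (Jacobi triple product) Let x, y be complex numbers with 0 < |x| < 1 and y ≠ 0. Then the infinite product ∏_{m=1}^∞ (1 − x^{2m})(1 + x^{2m−1} y)(1 + x^{2m−1} y^{−1}) converges (the family is multipliable) and equals the absolutely convergent sum Σ_{l∈ℤ} x^{l²} y^l. -/
/-!
Write `t = x²` and `(t; t)_n = ∏_{m=1}^{n} (1 - t^m)`. By induction on `N`,
`∏_{m=1}^{N} (1 - t^m)(1 + x^{2m-1} y)(1 + x^{2m-1} y⁻¹) = ∑_{|l| ≤ N} x^{l²} y^l D_N(l)`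
with `D_N(l) = (t; t)_N (t; t)_{2N} / ((t; t)_{N-l} (t; t)_{N+l})`, that is `(t; t)_N` times the
Gaussian binomial `[2N, N + l]_t`: multiplying by the next factor and shifting `l` by `±1` reduces
the step to a three-term recursion for `D_N(l)`, which is a polynomial identity in `t`.
Since `(t; t)_n` converges to the non-zero Euler product `(t; t)_∞`, the coefficients `D_N(l)` are
bounded and tend to `1` for each `l`, so Tannery's theorem lets `N → ∞` in the sum.
-/

open Filter Topology

namespace JacobiTripleProduct

variable {t : ℂ}

def qPochhammer (t : ℂ) (n : ℕ) : ℂ := ∏ m ∈ Finset.range n, (1 - t ^ (m + 1))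

lemma qPochhammer_succ (n : ℕ) :
    qPochhammer t (n + 1) = qPochhammer t n * (1 - t ^ (n + 1)) :=
  Finset.prod_range_succ _ n

lemma one_sub_pow_ne_zero (ht : ‖t‖ < 1) {m : ℕ} (hm : m ≠ 0) : 1 - t ^ m ≠ 0 := by
  rw [sub_ne_zero, ne_comm]
  exact ne_of_apply_ne norm (by simpa using (pow_lt_one₀ (norm_nonneg t) ht hm).ne)

lemma summable_norm_neg_pow_succ (ht : ‖t‖ < 1) : Summable fun m : ℕ => ‖-t ^ (m + 1)‖ := by
  simpa [norm_pow, pow_succ] using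
    (summable_geometric_of_lt_one (norm_nonneg t) ht).mul_right ‖t‖

lemma multipliable_one_sub_pow_succ (ht : ‖t‖ < 1) :
    Multipliable fun m : ℕ => 1 - t ^ (m + 1) := by
  simpa [sub_eq_add_neg] using multipliable_one_add_of_summable (summable_norm_neg_pow_succ ht)

lemma tprod_one_sub_pow_succ_ne_zero (ht : ‖t‖ < 1) : ∏' m : ℕ, (1 - t ^ (m + 1)) ≠ 0 := by
  simpa [sub_eq_add_neg] using tprod_one_add_ne_zero_of_summable
    (fun m => by simpa [sub_eq_add_neg] using one_sub_pow_ne_zero ht m.succ_ne_zero)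
    (summable_norm_neg_pow_succ ht)

lemma tendsto_qPochhammer (ht : ‖t‖ < 1) :
    Tendsto (qPochhammer t) atTop (𝓝 (∏' m : ℕ, (1 - t ^ (m + 1)))) :=
  (multipliable_one_sub_pow_succ ht).tendsto_prod_tprod_nat

/-- Extending `1 / (t; t)_n` by zero to `n < 0` makes `jacobiCoeff t N l` vanish for `|l| > N`
while keeping `invQPochhammer_eq_mul_succ` valid for all `n`. -/
noncomputable def invQPochhammer (t : ℂ) : ℤ → ℂ
  | (n : ℕ) => (qPochhammer t n)⁻¹
  | Int.negSucc _ => 0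

lemma invQPochhammer_of_neg {n : ℤ} (hn : n < 0) : invQPochhammer t n = 0 := by
  rcases n with n | n
  · simp only [Int.ofNat_eq_natCast] at hn
    omega
  · rfl

lemma invQPochhammer_eq_mul_succ (ht : ‖t‖ < 1) (n : ℤ) :
    invQPochhammer t n = (1 - t ^ (n + 1)) * invQPochhammer t (n + 1) := by
  rcases n with n | _ | n
  · rw [Int.ofNat_eq_natCast, show (n : ℤ) + 1 = ((n + 1 : ℕ) : ℤ) by push_cast; ring]
    simp only [invQPochhammer, qPochhammer_succ, zpow_natCast, mul_inv]
    rw [mul_left_comm, mul_inv_cancel₀ (one_sub_pow_ne_zero ht n.succ_ne_zero), mul_one]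
  · simp [invQPochhammer]
  · rw [show Int.negSucc (n + 1) + 1 = Int.negSucc n from rfl]
    simp [invQPochhammer]

lemma tendsto_invQPochhammer (ht : ‖t‖ < 1) :
    Tendsto (invQPochhammer t) atTop (𝓝 (∏' m : ℕ, (1 - t ^ (m + 1)))⁻¹) := by
  have htoNat : Tendsto Int.toNat atTop atTop :=
    tendsto_atTop_atTop.2 fun b => ⟨b, fun n hn => by omega⟩
  refine (((tendsto_qPochhammer ht).inv₀ (tprod_one_sub_pow_succ_ne_zero ht)).comp htoNat).congr' ?_
  filter_upwards [eventually_ge_atTop 0] with n hn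
  lift n to ℕ using hn
  rfl

lemma exists_norm_invQPochhammer_le (ht : ‖t‖ < 1) : ∃ C, ∀ n, ‖invQPochhammer t n‖ ≤ C := by
  obtain ⟨C, hC⟩ := isBounded_iff_forall_norm_le.1 (Metric.isBounded_range_of_tendsto _
    ((tendsto_qPochhammer ht).inv₀ (tprod_one_sub_pow_succ_ne_zero ht)))
  refine ⟨C, fun n => ?_⟩
  rcases n with n | n
  · exact hC _ ⟨n, rfl⟩
  · simpa [invQPochhammer] using (norm_nonneg _).trans (hC _ ⟨0, rfl⟩)

noncomputable def jacobiCoeff (t : ℂ) (N : ℕ) (l : ℤ) : ℂ :=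
  qPochhammer t N * qPochhammer t (2 * N) * invQPochhammer t (N - l) * invQPochhammer t (N + l)

lemma jacobiCoeff_zero_zero : jacobiCoeff t 0 0 = 1 := by
  simp [jacobiCoeff, qPochhammer, invQPochhammer]

lemma jacobiCoeff_eq_zero {N : ℕ} {l : ℤ} (hl : (N : ℤ) < |l|) : jacobiCoeff t N l = 0 := by
  rcases lt_abs.1 hl with h | h
  · rw [jacobiCoeff, invQPochhammer_of_neg (t := t) (n := N - l) (by omega), mul_zero, zero_mul]
  · rw [jacobiCoeff, invQPochhammer_of_neg (t := t) (n := N + l) (by omega), mul_zero]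

lemma jacobiCoeff_succ (ht : ‖t‖ < 1) (ht0 : t ≠ 0) (N : ℕ) (l : ℤ) :
    jacobiCoeff t (N + 1) l = (1 - t ^ (N + 1)) * (jacobiCoeff t N l * (1 + t ^ (2 * N + 1))
      + jacobiCoeff t N (l - 1) * t ^ ((N : ℤ) - l + 1)
      + jacobiCoeff t N (l + 1) * t ^ ((N : ℤ) + l + 1)) := by
  have ha := invQPochhammer_eq_mul_succ ht (N - l)
  have ha' := invQPochhammer_eq_mul_succ ht (N - l - 1)
  have hb := invQPochhammer_eq_mul_succ ht (N + l)
  have hb' := invQPochhammer_eq_mul_succ ht (N + l - 1)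
  have huv : t ^ ((N : ℤ) - l) * t ^ ((N : ℤ) + l) = t ^ (2 * N) := by
    rw [← zpow_add₀ ht0, ← zpow_natCast]
    congr 1
    push_cast
    ring
  simp only [jacobiCoeff, sub_add_cancel, zpow_add_one₀ ht0] at *
  rw [show 2 * (N + 1) = 2 * N + 1 + 1 by ring, qPochhammer_succ, qPochhammer_succ,
    qPochhammer_succ, show ((N + 1 : ℕ) : ℤ) - l = N - l + 1 by push_cast; ring,
    show ((N + 1 : ℕ) : ℤ) + l = N + l + 1 by push_cast; ring,
    show (N : ℤ) - (l - 1) = N - l + 1 by ring, show (N : ℤ) + (l - 1) = N + l - 1 by ring,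
    show (N : ℤ) - (l + 1) = N - l - 1 by ring, show (N : ℤ) + (l + 1) = N + l + 1 by ring,
    ha', hb', ha, hb]
  -- what is left is a polynomial identity in `t`, `u = t ^ (N - l)`, `v = t ^ (N + l)`,
  -- valid modulo `u * v = t ^ (2 * N)`
  generalize t ^ ((N : ℤ) - l) = u at *
  generalize t ^ ((N : ℤ) + l) = v at *
  linear_combination (1 - t ^ (N + 1)) * qPochhammer t N * qPochhammer t (2 * N)
    * invQPochhammer t (N - l + 1) * invQPochhammer t (N + l + 1)
    * (2 * t + t ^ 2 - t ^ 3 * t ^ (2 * N) - t ^ 2 * (u + v)) * huv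

lemma tendsto_jacobiCoeff (ht : ‖t‖ < 1) (l : ℤ) :
    Tendsto (fun N => jacobiCoeff t N l) atTop (𝓝 1) := by
  have hE := tprod_one_sub_pow_succ_ne_zero ht
  set E := ∏' m : ℕ, (1 - t ^ (m + 1))
  have hP := tendsto_qPochhammer ht
  have hR := tendsto_invQPochhammer ht
  have hN : Tendsto (fun N : ℕ => (N : ℤ)) atTop atTop := tendsto_natCast_atTop_atTop
  have h := ((hP.mul (hP.comp (tendsto_id.const_mul_atTop' two_pos))).mul
    (hR.comp (tendsto_atTop_add_const_right _ (-l) hN))).mul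
    (hR.comp (tendsto_atTop_add_const_right _ l hN))
  rw [show E * E * E⁻¹ * E⁻¹ = 1 by field_simp] at h
  simpa [jacobiCoeff, Function.comp_def, ← sub_eq_add_neg] using h

lemma exists_norm_jacobiCoeff_le (ht : ‖t‖ < 1) : ∃ C, ∀ N l, ‖jacobiCoeff t N l‖ ≤ C := by
  obtain ⟨B, hB⟩ := isBounded_iff_forall_norm_le.1
    (Metric.isBounded_range_of_tendsto _ (tendsto_qPochhammer ht))
  obtain ⟨C, hC⟩ := exists_norm_invQPochhammer_le ht
  have hB0 : 0 ≤ B := (norm_nonneg _).trans (hB _ ⟨0, rfl⟩)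
  have hC0 : 0 ≤ C := (norm_nonneg _).trans (hC 0)
  refine ⟨B * B * C * C, fun N l => ?_⟩
  simp only [jacobiCoeff, norm_mul]
  gcongr
  exacts [hB _ ⟨N, rfl⟩, hB _ ⟨2 * N, rfl⟩, hC _, hC _]

lemma summable_pow_sq_mul_pow {r s : ℝ} (hr0 : 0 ≤ r) (hr : r < 1) (hs : 0 ≤ s) :
    Summable fun n : ℕ => r ^ (n ^ 2) * s ^ n := by
  have h0 : Tendsto (fun n : ℕ => r ^ n * s) atTop (𝓝 0) := by
    simpa using (tendsto_pow_atTop_nhds_zero_of_lt_one hr0 hr).mul_const s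
  refine (summable_geometric_two).of_norm_bounded_eventually_nat ?_
  filter_upwards [h0.eventually_le_const one_half_pos] with n hn
  rw [Real.norm_of_nonneg (by positivity), sq, pow_mul, ← mul_pow, one_div]
  exact pow_le_pow_left₀ (by positivity) (by simpa using hn) n

variable {x y : ℂ}

lemma norm_sq_lt_one (hx : ‖x‖ < 1) : ‖x ^ 2‖ < 1 := by
  simpa [norm_pow] using pow_lt_one₀ (norm_nonneg x) hx two_ne_zero

lemma summable_norm_zpow_sq_mul_zpow (hx : ‖x‖ < 1) (y : ℂ) :
    Summable fun l : ℤ => ‖x ^ (l ^ 2) * y ^ l‖ := by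
  have key (z : ℂ) : Summable fun n : ℕ => ‖x ^ ((n : ℤ) ^ 2) * z ^ (n : ℤ)‖ :=
    (summable_pow_sq_mul_pow (norm_nonneg x) hx (norm_nonneg z)).congr fun n => by
      rw [← Nat.cast_pow, zpow_natCast, zpow_natCast, norm_mul, norm_pow, norm_pow]
  refine .of_nat_of_neg (key y) ((key y⁻¹).congr fun n => ?_)
  simp [zpow_neg]

noncomputable def jacobiFactor (x y : ℂ) (m : ℕ) : ℂ :=
  (1 - x ^ (2 * m + 2)) * (1 + x ^ (2 * m + 1) * y) * (1 + x ^ (2 * m + 1) * y⁻¹)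

lemma multipliable_jacobiFactor (hx : ‖x‖ < 1) (y : ℂ) : Multipliable (jacobiFactor x y) := by
  have h₁ : Multipliable fun m : ℕ => 1 - x ^ (2 * m + 2) := by
    simpa [← pow_mul, mul_add] using multipliable_one_sub_pow_succ (norm_sq_lt_one hx)
  have h₂ (c : ℂ) : Multipliable fun m : ℕ => 1 + x ^ (2 * m + 1) * c := by
    have hgeom := summable_geometric_of_lt_one (norm_nonneg _) (norm_sq_lt_one hx)
    refine multipliable_one_add_of_summable ((hgeom.mul_left (‖x‖ * ‖c‖)).congr fun m => ?_)
    rw [norm_mul, norm_pow, norm_pow]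
    ring
  exact (h₁.mul (h₂ y)).mul (h₂ y⁻¹)

lemma zpow_add_sq_mul_zpow (hx : x ≠ 0) (hy : y ≠ 0) (N : ℕ) (l k : ℤ) :
    x ^ ((l + k) ^ 2) * y ^ (l + k) * (x ^ 2) ^ ((N : ℤ) - k * l)
      = x ^ (2 * (N : ℤ) + k ^ 2) * y ^ k * (x ^ (l ^ 2) * y ^ l) := by
  rw [← zpow_natCast x 2, ← zpow_mul, mul_right_comm, ← zpow_add₀ hx,
    show (l + k) ^ 2 + ((2 : ℕ) : ℤ) * (N - k * l) = 2 * N + k ^ 2 + l ^ 2 by push_cast; ring,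
    zpow_add₀ hx, zpow_add₀ hy]
  ring

lemma hasSum_theta_shift (hx : x ≠ 0) (hy : y ≠ 0) (N : ℕ) (k : ℤ) {c : ℤ → ℂ} {S : ℂ}
    (h : HasSum (fun l : ℤ => x ^ (l ^ 2) * y ^ l * c l) S) :
    HasSum (fun l : ℤ => x ^ (l ^ 2) * y ^ l * (c (l - k) * (x ^ 2) ^ ((N : ℤ) - k * l + k ^ 2)))
      (x ^ (2 * (N : ℤ) + k ^ 2) * y ^ k * S) := by
  rw [← (Equiv.addRight k).hasSum_iff]
  refine (h.mul_left _).congr_fun fun l => ?_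
  simp only [Function.comp_apply, Equiv.coe_addRight, add_sub_cancel_right,
    show (N : ℤ) - k * (l + k) + k ^ 2 = N - k * l by ring]
  linear_combination c l * zpow_add_sq_mul_zpow hx hy N l k

lemma hasSum_jacobiCoeff (hx : x ≠ 0) (hx1 : ‖x‖ < 1) (hy : y ≠ 0) (N : ℕ) :
    HasSum (fun l : ℤ => x ^ (l ^ 2) * y ^ l * jacobiCoeff (x ^ 2) N l)
      (∏ m ∈ Finset.range N, jacobiFactor x y m) := by
  induction N with
  | zero =>
    have h := hasSum_single (f := fun l : ℤ => x ^ (l ^ 2) * y ^ l * jacobiCoeff (x ^ 2) 0 l) 0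
      fun l hl => by rw [jacobiCoeff_eq_zero (by simpa [abs_pos] using hl), mul_zero]
    simpa [jacobiCoeff_zero_zero] using h
  | succ N ih =>
    set S := ∏ m ∈ Finset.range N, jacobiFactor x y m
    have hodd : x ^ (2 * (N : ℤ) + 1) = x ^ (2 * N + 1) := by
      rw [← zpow_natCast]
      push_cast
      rfl
    have hup := hasSum_theta_shift hx hy N 1 ih
    have hdown := hasSum_theta_shift hx hy N (-1) ih
    simp only [one_pow, one_mul, zpow_one, neg_one_sq, neg_one_mul, sub_neg_eq_add, zpow_neg_one,
      hodd] at hup hdown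
    have hprod : ∏ m ∈ Finset.range (N + 1), jacobiFactor x y m = (1 - (x ^ 2) ^ (N + 1)) *
        (S * (1 + (x ^ 2) ^ (2 * N + 1)) + x ^ (2 * N + 1) * y * S + x ^ (2 * N + 1) * y⁻¹ * S) := by
      rw [Finset.prod_range_succ, jacobiFactor]
      linear_combination (1 - x ^ (2 * N + 2)) * S * x ^ (4 * N + 2) * mul_inv_cancel₀ hy
    rw [hprod]
    refine ((((ih.mul_right _).add hup).add hdown).mul_left _).congr_fun fun l => ?_
    rw [jacobiCoeff_succ (norm_sq_lt_one hx1) (pow_ne_zero 2 hx)]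
    ring

lemma tendsto_tsum_mul_jacobiCoeff (hx : ‖x‖ < 1) (y : ℂ) :
    Tendsto (fun N => ∑' l : ℤ, x ^ (l ^ 2) * y ^ l * jacobiCoeff (x ^ 2) N l) atTop
      (𝓝 (∑' l : ℤ, x ^ (l ^ 2) * y ^ l)) := by
  obtain ⟨C, hC⟩ := exists_norm_jacobiCoeff_le (norm_sq_lt_one hx)
  refine tendsto_tsum_of_dominated_convergence ((summable_norm_zpow_sq_mul_zpow hx y).mul_right C)
    (fun l => ?_) (.of_forall fun N l => ?_)
  · simpa using (tendsto_jacobiCoeff (norm_sq_lt_one hx) l).const_mul (x ^ (l ^ 2) * y ^ l)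
  · rw [norm_mul]
    exact mul_le_mul_of_nonneg_left (hC N l) (norm_nonneg _)

end JacobiTripleProduct

open JacobiTripleProduct

/-- Jacobi triple product: for `0 < |x| < 1` and `y ≠ 0`, the infinite product
`∏_{m=1}^∞ (1 − x^{2m})(1 + x^{2m−1} y)(1 + x^{2m−1} y⁻¹)` converges and equals the
absolutely convergent sum `Σ_{l∈ℤ} x^{l²} y^l`. (The product is indexed by `m : ℕ`,
with `m + 1` playing the role of `m ≥ 1`.) -/
theorem jacobi_triple_product (x y : ℂ) (hx0 : 0 < ‖x‖) (hx1 : ‖x‖ < 1) (hy : y ≠ 0) :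
    Multipliable (fun m : ℕ =>
      (1 - x ^ (2 * m + 2)) * (1 + x ^ (2 * m + 1) * y) * (1 + x ^ (2 * m + 1) * y⁻¹)) ∧
    Summable (fun l : ℤ => ‖x ^ (l ^ 2) * y ^ l‖) ∧
    (∏' m : ℕ,
        (1 - x ^ (2 * m + 2)) * (1 + x ^ (2 * m + 1) * y) * (1 + x ^ (2 * m + 1) * y⁻¹))
      = ∑' l : ℤ, x ^ (l ^ 2) * y ^ l := by
  have hmul : Multipliable (jacobiFactor x y) := multipliable_jacobiFactor hx1 y
  refine ⟨hmul, summable_norm_zpow_sq_mul_zpow hx1 y,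
    tendsto_nhds_unique ?_ (tendsto_tsum_mul_jacobiCoeff hx1 y)⟩
  refine hmul.tendsto_prod_tprod_nat.congr fun N => ?_
  exact (hasSum_jacobiCoeff (norm_pos_iff.1 hx0) hx1 hy N).tsum_eq.symm
end

section
/- Let q, q₁, z be nonzero complex numbers with 0 < |q| < 1. Then ∏_{i=1}^∞ (1 + q^{2i−1} q₁ z^{−2})(1 + q^{2i−1} q₁^{−1} z²) = (∏_{k=1}^∞ (1 − q^{2k}))^{−1} · Σ_{l∈ℤ} q^{l²} (z²/q₁)^l, where both infinite products converge (are multipliable), the product ∏_{k=1}^∞ (1 − q^{2k}) is nonzero, and the series converges absolutely. -/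
/-!
Rothe's `q`-binomial theorem `∏_{j<M} (1 + x Qʲ) = ∑ₖ Q^(k choose 2) [M, k]_Q xᵏ`, taken at
`Q = q²`, `M = 2N` and `x = t q^(1 - 2N)`, gives the truncated triple product
`∏_{i<N} (1 + q^(2i+1) t⁻¹)(1 + q^(2i+1) t) = ∑_{|l| ≤ N} [2N, N + l]_{q²} q^(l²) tˡ`.
As `N → ∞` each coefficient `[2N, N + l]_{q²} = (q²; q²)_{2N} / ((q²; q²)_{N+l} (q²; q²)_{N-l})`
tends to `1 / (q²; q²)_∞`, and the coefficients are bounded uniformly because `(q²; q²)ₙ`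
converges to a nonzero limit; so Tannery's theorem (dominated convergence for series) passes to
the limit. The theorem is the case `t = z² / q₁`.
-/

open Finset Filter Topology

section GaussianBinomial

variable {R : Type*} [CommRing R] (Q : R)

/-- `qPochhammer Q n` is `(Q; Q)ₙ`. -/
def qPochhammer (n : ℕ) : R := ∏ k ∈ range n, (1 - Q ^ (k + 1))

/-- The Gaussian binomial coefficient, defined by the `Q`-Pascal rule so that no division is
needed; `gaussBinom_add_mul_qPochhammer` recovers `(Q; Q)ₘ / ((Q; Q)ₖ (Q; Q)ₘ₋ₖ)`. -/
def gaussBinom : ℕ → ℕ → R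
  | _, 0 => 1
  | 0, _ + 1 => 0
  | M + 1, k + 1 => gaussBinom M (k + 1) + Q ^ (M - k) * gaussBinom M k

@[simp] lemma gaussBinom_zero_right (M : ℕ) : gaussBinom Q M 0 = 1 := by
  cases M <;> rfl

lemma gaussBinom_succ_succ (M k : ℕ) :
    gaussBinom Q (M + 1) (k + 1) = gaussBinom Q M (k + 1) + Q ^ (M - k) * gaussBinom Q M k :=
  rfl

lemma gaussBinom_eq_zero_of_lt {M k : ℕ} (h : M < k) : gaussBinom Q M k = 0 := by
  induction M generalizing k with
  | zero => obtain ⟨k, rfl⟩ := Nat.exists_eq_succ_of_ne_zero h.ne'; rfl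
  | succ M ih =>
    obtain ⟨k, rfl⟩ := Nat.exists_eq_succ_of_ne_zero (Nat.ne_zero_of_lt h)
    rw [gaussBinom_succ_succ, ih (by omega), ih (by omega), mul_zero, add_zero]

@[simp] lemma gaussBinom_self (M : ℕ) : gaussBinom Q M M = 1 := by
  induction M with
  | zero => rfl
  | succ M ih => rw [gaussBinom_succ_succ, gaussBinom_eq_zero_of_lt Q M.lt_succ_self, ih]; simp

lemma qPochhammer_succ (n : ℕ) : qPochhammer Q (n + 1) = qPochhammer Q n * (1 - Q ^ (n + 1)) :=
  prod_range_succ _ n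

lemma gaussBinom_add_mul_qPochhammer (k e : ℕ) :
    gaussBinom Q (k + e) k * qPochhammer Q k * qPochhammer Q e = qPochhammer Q (k + e) := by
  induction k generalizing e with
  | zero => simp [qPochhammer]
  | succ k ihk =>
    induction e with
    | zero => simp [qPochhammer]
    | succ e ihe =>
      have hk := ihk (e + 1)
      rw [show k + 1 + (e + 1) = k + 1 + e + 1 by ring, gaussBinom_succ_succ,
        show k + 1 + e - k = e + 1 by omega, qPochhammer_succ Q e, qPochhammer_succ Q (k + 1 + e)]
      rw [qPochhammer_succ Q k] at ihe ⊢
      rw [show k + (e + 1) = k + 1 + e by ring, qPochhammer_succ Q e] at hk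
      linear_combination (1 - Q ^ (e + 1)) * ihe + Q ^ (e + 1) * (1 - Q ^ (k + 1)) * hk

lemma succ_choose_two_add_sub {k M : ℕ} (h : k ≤ M) :
    (k + 1).choose 2 + (M - k) = k.choose 2 + M := by
  have hsucc : (k + 1).choose 2 = k.choose 2 + k := by
    rw [Nat.choose_succ_succ', Nat.choose_one_right, add_comm]
  omega

theorem prod_range_one_add_mul_pow (x : R) (M : ℕ) :
    ∏ j ∈ range M, (1 + x * Q ^ j) =
      ∑ k ∈ range (M + 1), Q ^ k.choose 2 * gaussBinom Q M k * x ^ k := by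
  induction M with
  | zero => simp
  | succ M ih =>
    set c : ℕ → R := fun k => Q ^ k.choose 2 * gaussBinom Q M k * x ^ k with hc
    have hshift : ∀ k ∈ range (M + 1),
        Q ^ (k + 1).choose 2 * gaussBinom Q (M + 1) (k + 1) * x ^ (k + 1) =
          c (k + 1) + c k * (x * Q ^ M) := by
      intro k hk
      have hexp : Q ^ (k + 1).choose 2 * Q ^ (M - k) = Q ^ k.choose 2 * Q ^ M := by
        rw [← pow_add, ← pow_add, succ_choose_two_add_sub (Nat.lt_succ_iff.1 (mem_range.1 hk))]
      rw [gaussBinom_succ_succ]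
      linear_combination (gaussBinom Q M k * x ^ (k + 1)) * hexp
    have hcM : c (M + 1) = 0 := by simp [hc, gaussBinom_eq_zero_of_lt Q M.lt_succ_self]
    have hc0 : c 0 = 1 := by simp [hc]
    have hS : (range (M + 1)).sum c = ∑ k ∈ range (M + 1), c (k + 1) + c 0 := by
      rw [sum_range_succ (fun k => c (k + 1)), hcM, add_zero, sum_range_succ']
    clear_value c
    rw [prod_range_succ, ih, sum_range_succ' _ (M + 1), sum_congr rfl hshift, sum_add_distrib,
      ← sum_mul, gaussBinom_zero_right]
    simp only [Nat.choose_zero_succ, pow_zero]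
    linear_combination hS + hc0

end GaussianBinomial

section FiniteJacobi

variable {K : Type*} [Field K] {q t : K}

lemma zpow_mul_sq_pow (hq : q ≠ 0) (a : ℤ) (m : ℕ) : q ^ a * (q ^ 2) ^ m = q ^ (a + 2 * m) := by
  rw [← pow_mul, ← zpow_natCast, ← zpow_add₀ hq]
  push_cast
  ring_nf

lemma prod_range_mul_zpow_neg_odd (hq : q ≠ 0) (ht : t ≠ 0) (N : ℕ) :
    ∏ i ∈ range N, t * q ^ (-(2 * (i : ℤ) + 1)) = t ^ (N : ℤ) * q ^ (-(N : ℤ) ^ 2) := by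
  induction N with
  | zero => simp
  | succ N ih =>
    rw [prod_range_succ, ih]
    push_cast
    rw [zpow_add₀ ht, show -((N : ℤ) + 1) ^ 2 = -(N : ℤ) ^ 2 + -(2 * N + 1) by ring,
      zpow_add₀ hq, zpow_one]
    ring

lemma prod_range_two_mul_one_add (hq : q ≠ 0) (ht : t ≠ 0) (N : ℕ) :
    ∏ j ∈ range (2 * N), (1 + t * q ^ (1 - 2 * (N : ℤ)) * (q ^ 2) ^ j) =
      t ^ (N : ℤ) * q ^ (-(N : ℤ) ^ 2) *
        ∏ i ∈ range N, ((1 + q ^ (2 * i + 1) * t⁻¹) * (1 + q ^ (2 * i + 1) * t)) := by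
  have hlow : ∀ i ∈ range N, 1 + t * q ^ (1 - 2 * (N : ℤ)) * (q ^ 2) ^ (N - 1 - i) =
      t * q ^ (-(2 * (i : ℤ) + 1)) * (1 + q ^ (2 * i + 1) * t⁻¹) := by
    intro i hi
    have hiN : i < N := mem_range.1 hi
    rw [mul_assoc, zpow_mul_sq_pow hq, show 1 - 2 * (N : ℤ) + 2 * ((N - 1 - i : ℕ) : ℤ)
      = -(2 * (i : ℤ) + 1) by omega, zpow_neg, ← zpow_natCast, Nat.cast_add, Nat.cast_mul]
    field_simp
    ring_nf
  have hhigh : ∀ i ∈ range N, 1 + t * q ^ (1 - 2 * (N : ℤ)) * (q ^ 2) ^ (N + i) =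
      1 + q ^ (2 * i + 1) * t := by
    intro i _
    rw [mul_assoc, zpow_mul_sq_pow hq, show 1 - 2 * (N : ℤ) + 2 * ((N + i : ℕ) : ℤ)
      = ((2 * i + 1 : ℕ) : ℤ) by push_cast; ring, zpow_natCast, mul_comm]
  rw [two_mul, prod_range_add, ← prod_range_reflect _ N, prod_congr rfl hlow,
    prod_congr rfl hhigh, prod_mul_distrib, prod_range_mul_zpow_neg_odd hq ht,
    prod_mul_distrib, mul_assoc]

lemma two_mul_choose_two (k : ℕ) : 2 * (k.choose 2 : ℤ) = k * (k - 1) := by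
  induction k with
  | zero => simp
  | succ k ih =>
    rw [Nat.choose_succ_succ', Nat.choose_one_right]
    push_cast
    linear_combination ih

theorem prod_range_jacobi_triple_product (hq : q ≠ 0) (ht : t ≠ 0) (N : ℕ) :
    ∏ i ∈ range N, ((1 + q ^ (2 * i + 1) * t⁻¹) * (1 + q ^ (2 * i + 1) * t)) =
      ∑ l ∈ Icc (-(N : ℤ)) N, gaussBinom (q ^ 2) (2 * N) (l + N).toNat * (q ^ (l ^ 2) * t ^ l) := by
  have hrothe := prod_range_one_add_mul_pow (q ^ 2) (t * q ^ (1 - 2 * (N : ℤ))) (2 * N)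
  have hterm : ∀ k ∈ range (2 * N + 1),
      (q ^ 2) ^ k.choose 2 * gaussBinom (q ^ 2) (2 * N) k * (t * q ^ (1 - 2 * (N : ℤ))) ^ k =
        t ^ (N : ℤ) * q ^ (-(N : ℤ) ^ 2) * (gaussBinom (q ^ 2) (2 * N) k *
          (q ^ (((k : ℤ) - N) ^ 2) * t ^ ((k : ℤ) - N))) := by
    intro k _
    have hexp : (q ^ 2) ^ k.choose 2 * (q ^ (1 - 2 * (N : ℤ))) ^ k =
        q ^ (-(N : ℤ) ^ 2) * q ^ (((k : ℤ) - N) ^ 2) := by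
      rw [mul_comm, ← zpow_natCast _ k, ← zpow_mul, zpow_mul_sq_pow hq, ← zpow_add₀ hq,
        two_mul_choose_two]
      ring_nf
    have htk : t ^ k = t ^ (N : ℤ) * t ^ ((k : ℤ) - N) := by
      rw [← zpow_add₀ ht, add_sub_cancel, zpow_natCast]
    rw [mul_pow, htk]
    linear_combination (gaussBinom (q ^ 2) (2 * N) k * t ^ (N : ℤ) * t ^ ((k : ℤ) - N)) * hexp
  rw [prod_range_two_mul_one_add hq ht, sum_congr rfl hterm, ← mul_sum] at hrothe
  rw [mul_left_cancel₀ (by positivity) hrothe]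
  refine sum_nbij' (fun k => (k : ℤ) - N) (fun l => (l + N).toNat) ?_ ?_ ?_ ?_ ?_ <;>
    intro a ha <;> simp only [mem_range, mem_Icc] at ha ⊢
  all_goals first | omega | rw [sub_add_cancel, Int.toNat_natCast]

end FiniteJacobi

lemma summable_pow_sq_mul_pow {r a : ℝ} (hr0 : 0 ≤ r) (hr1 : r < 1) (ha : 0 ≤ a) :
    Summable fun n : ℕ => r ^ (n ^ 2) * a ^ n := by
  have hsmall : ∀ᶠ n : ℕ in atTop, r ^ n * a ≤ 1 / 2 := by
    have h := (tendsto_pow_atTop_nhds_zero_of_lt_one hr0 hr1).mul_const a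
    rw [zero_mul] at h
    exact (h.eventually_lt_const one_half_pos).mono fun _ => le_of_lt
  refine summable_geometric_two.of_norm_bounded_eventually_nat ?_
  filter_upwards [hsmall] with n hn
  rw [Real.norm_of_nonneg (by positivity), sq, pow_mul, ← mul_pow]
  exact pow_le_pow_left₀ (by positivity) hn n

section NormedField

variable {𝕜 : Type*} [NormedField 𝕜] {Q : 𝕜}

lemma norm_sq_lt_one {q : 𝕜} (hq : ‖q‖ < 1) : ‖q ^ 2‖ < 1 := by
  rw [norm_pow]
  exact pow_lt_one₀ (norm_nonneg q) hq two_ne_zero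

lemma summable_norm_zpow_sq_mul_zpow {q : 𝕜} (hq : ‖q‖ < 1) (t : 𝕜) :
    Summable fun l : ℤ => ‖q ^ (l ^ 2) * t ^ l‖ := by
  refine Summable.of_nat_of_neg ?_ ?_
  · refine (summable_pow_sq_mul_pow (norm_nonneg q) hq (norm_nonneg t)).congr fun n => ?_
    rw [norm_mul, norm_zpow, norm_zpow, ← Nat.cast_pow, zpow_natCast, zpow_natCast]
  · refine (summable_pow_sq_mul_pow (norm_nonneg q) hq (norm_nonneg t⁻¹)).congr fun n => ?_
    rw [norm_mul, norm_zpow, norm_zpow, neg_sq, ← Nat.cast_pow, zpow_natCast, zpow_neg,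
      zpow_natCast, norm_inv, inv_pow]

lemma summable_norm_pow_odd_mul {q : 𝕜} (hq : ‖q‖ < 1) (c : 𝕜) :
    Summable fun i : ℕ => ‖q ^ (2 * i + 1) * c‖ := by
  refine ((summable_geometric_of_lt_one (norm_nonneg _) (norm_sq_lt_one hq)).mul_left
    ‖q * c‖).congr fun i => ?_
  rw [← norm_pow, ← norm_mul, pow_add, pow_mul, pow_one]
  ring_nf

lemma one_sub_pow_succ_ne_zero (hQ : ‖Q‖ < 1) (k : ℕ) : 1 - Q ^ (k + 1) ≠ 0 := by
  have hlt : ‖Q ^ (k + 1)‖ < 1 := by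
    rw [norm_pow]; exact pow_lt_one₀ (norm_nonneg Q) hQ k.succ_ne_zero
  intro h
  rw [← sub_eq_zero.1 h, norm_one] at hlt
  exact hlt.false

lemma qPochhammer_ne_zero (hQ : ‖Q‖ < 1) (n : ℕ) : qPochhammer Q n ≠ 0 :=
  prod_ne_zero_iff.2 fun k _ => one_sub_pow_succ_ne_zero hQ k

lemma summable_norm_neg_pow_succ (hQ : ‖Q‖ < 1) : Summable fun k : ℕ => ‖-Q ^ (k + 1)‖ := by
  simpa [norm_pow, pow_succ] using
    (summable_geometric_of_lt_one (norm_nonneg Q) hQ).mul_right ‖Q‖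

lemma gaussBinom_add_eq_mul_inv (hQ : ‖Q‖ < 1) (k e : ℕ) : gaussBinom Q (k + e) k =
    qPochhammer Q (k + e) * (qPochhammer Q k)⁻¹ * (qPochhammer Q e)⁻¹ := by
  rw [← gaussBinom_add_mul_qPochhammer]
  field_simp [qPochhammer_ne_zero hQ]

end NormedField

section CompleteNormedField

variable {𝕜 : Type*} [NormedField 𝕜] [CompleteSpace 𝕜] {Q : 𝕜}

lemma multipliable_one_sub_pow_succ (hQ : ‖Q‖ < 1) :
    Multipliable fun k : ℕ => 1 - Q ^ (k + 1) := by
  simp_rw [sub_eq_add_neg]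
  exact multipliable_one_add_of_summable (summable_norm_neg_pow_succ hQ)

lemma tprod_one_sub_pow_succ_ne_zero (hQ : ‖Q‖ < 1) : ∏' k : ℕ, (1 - Q ^ (k + 1)) ≠ 0 := by
  have hne : ∀ k : ℕ, 1 + -Q ^ (k + 1) ≠ 0 := fun k => by
    rw [← sub_eq_add_neg]; exact one_sub_pow_succ_ne_zero hQ k
  simp_rw [sub_eq_add_neg]
  exact tprod_one_add_ne_zero_of_summable hne (summable_norm_neg_pow_succ hQ)

lemma tendsto_qPochhammer (hQ : ‖Q‖ < 1) :
    Tendsto (qPochhammer Q) atTop (𝓝 (∏' k : ℕ, (1 - Q ^ (k + 1)))) :=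
  (multipliable_one_sub_pow_succ hQ).hasProd.tendsto_prod_nat

lemma exists_norm_gaussBinom_le (hQ : ‖Q‖ < 1) : ∃ C, ∀ M k, ‖gaussBinom Q M k‖ ≤ C := by
  have hP := tendsto_qPochhammer hQ
  obtain ⟨A, hA⟩ := hP.norm.bddAbove_range
  obtain ⟨B, hB⟩ := (hP.inv₀ (tprod_one_sub_pow_succ_ne_zero hQ)).norm.bddAbove_range
  have hA' : ∀ n, ‖qPochhammer Q n‖ ≤ A := fun n => hA (Set.mem_range_self n)
  have hB' : ∀ n, ‖(qPochhammer Q n)⁻¹‖ ≤ B := fun n => hB (Set.mem_range_self n)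
  have hA0 : 0 ≤ A := (norm_nonneg _).trans (hA' 0)
  have hB0 : 0 ≤ B := (norm_nonneg _).trans (hB' 0)
  refine ⟨A * B * B, fun M k => ?_⟩
  rcases le_or_gt k M with hkM | hMk
  · obtain ⟨e, rfl⟩ := Nat.exists_eq_add_of_le hkM
    rw [gaussBinom_add_eq_mul_inv hQ, norm_mul, norm_mul]
    gcongr
    exacts [hA' _, hB' _, hB' _]
  · rw [gaussBinom_eq_zero_of_lt Q hMk, norm_zero]
    positivity

lemma tendsto_gaussBinom_two_mul (hQ : ‖Q‖ < 1) (l : ℤ) :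
    Tendsto (fun N : ℕ => gaussBinom Q (2 * N) (l + N).toNat) atTop
      (𝓝 (∏' k : ℕ, (1 - Q ^ (k + 1)))⁻¹) := by
  have hP := tendsto_qPochhammer hQ
  have hP0 := tprod_one_sub_pow_succ_ne_zero hQ
  have hidx : ∀ c : ℤ, Tendsto (fun N : ℕ => (c + N).toNat) atTop atTop :=
    fun c => tendsto_atTop_atTop.2 fun b => ⟨b + c.natAbs, fun N hN => by omega⟩
  have htwo : Tendsto (fun N : ℕ => 2 * N) atTop atTop :=
    tendsto_atTop_atTop.2 fun b => ⟨b, fun N hN => by omega⟩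
  have hlim := ((hP.comp htwo).mul ((hP.comp (hidx l)).inv₀ hP0)).mul
    ((hP.comp (hidx (-l))).inv₀ hP0)
  rw [mul_inv_cancel₀ hP0, one_mul] at hlim
  refine hlim.congr' ?_
  filter_upwards [eventually_ge_atTop l.natAbs] with N hN
  rw [Function.comp_apply, Function.comp_apply, Function.comp_apply,
    show 2 * N = (l + N).toNat + (-l + N).toNat by omega, gaussBinom_add_eq_mul_inv hQ]

theorem hasProd_jacobi_triple_product {q t : 𝕜} (hq0 : q ≠ 0) (hq1 : ‖q‖ < 1) (ht : t ≠ 0) :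
    HasProd (fun i : ℕ => (1 + q ^ (2 * i + 1) * t⁻¹) * (1 + q ^ (2 * i + 1) * t))
      ((∏' k : ℕ, (1 - (q ^ 2) ^ (k + 1)))⁻¹ * ∑' l : ℤ, q ^ (l ^ 2) * t ^ l) := by
  have hQ := norm_sq_lt_one hq1
  have hmult :
      Multipliable fun i : ℕ => (1 + q ^ (2 * i + 1) * t⁻¹) * (1 + q ^ (2 * i + 1) * t) :=
    (multipliable_one_add_of_summable (summable_norm_pow_odd_mul hq1 t⁻¹)).mul
      (multipliable_one_add_of_summable (summable_norm_pow_odd_mul hq1 t))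
  suffices hlim : Tendsto
      (fun N => ∏ i ∈ range N, ((1 + q ^ (2 * i + 1) * t⁻¹) * (1 + q ^ (2 * i + 1) * t))) atTop
      (𝓝 ((∏' k : ℕ, (1 - (q ^ 2) ^ (k + 1)))⁻¹ * ∑' l : ℤ, q ^ (l ^ 2) * t ^ l)) by
    rw [← tendsto_nhds_unique hmult.hasProd.tendsto_prod_nat hlim]
    exact hmult.hasProd
  obtain ⟨C, hC⟩ := exists_norm_gaussBinom_le hQ
  refine .congr (fun N => ((prod_range_jacobi_triple_product hq0 ht N).trans
    (sum_eq_tsum_indicator _ _)).symm) ?_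
  rw [← tsum_mul_left]
  refine tendsto_tsum_of_dominated_convergence (bound := fun l : ℤ => C * ‖q ^ (l ^ 2) * t ^ l‖)
    ((summable_norm_zpow_sq_mul_zpow hq1 t).mul_left C) (fun l => ?_) (.of_forall fun N l => ?_)
  · refine ((tendsto_gaussBinom_two_mul hQ l).mul_const (q ^ (l ^ 2) * t ^ l)).congr' ?_
    filter_upwards [eventually_ge_atTop l.natAbs] with N hN
    rw [Set.indicator_of_mem (by rw [mem_coe, mem_Icc]; omega)]
  · refine (norm_indicator_le_norm_self _ _).trans ?_
    rw [norm_mul]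
    exact mul_le_mul_of_nonneg_right (hC _ _) (norm_nonneg _)

end CompleteNormedField

/-- Evaluation of the glued even-index superpotential `W₂′`:
for nonzero `q, q₁, z` with `0 < |q| < 1`,
`∏_{i=1}^∞ (1 + q^{2i−1} q₁ z⁻²)(1 + q^{2i−1} q₁⁻¹ z²)
  = (∏_{k=1}^∞ (1 − q^{2k}))⁻¹ · Σ_{l∈ℤ} q^{l²} (z²/q₁)^l`,
where both infinite products converge, the product `∏_{k=1}^∞ (1 − q^{2k})` is nonzero,
and the series converges absolutely. -/
theorem glued_superpotential_even (q q₁ z : ℂ) (hq0 : 0 < ‖q‖) (hq1 : ‖q‖ < 1)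
    (hq₁ : q₁ ≠ 0) (hz : z ≠ 0) :
    Multipliable (fun i : ℕ =>
      (1 + q ^ (2 * i + 1) * q₁ * (z ^ 2)⁻¹) * (1 + q ^ (2 * i + 1) * q₁⁻¹ * z ^ 2)) ∧
    Multipliable (fun k : ℕ => 1 - q ^ (2 * k + 2)) ∧
    (∏' k : ℕ, (1 - q ^ (2 * k + 2))) ≠ 0 ∧
    Summable (fun l : ℤ => ‖q ^ (l ^ 2) * (z ^ 2 / q₁) ^ l‖) ∧
    (∏' i : ℕ, (1 + q ^ (2 * i + 1) * q₁ * (z ^ 2)⁻¹) * (1 + q ^ (2 * i + 1) * q₁⁻¹ * z ^ 2))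
      = (∏' k : ℕ, (1 - q ^ (2 * k + 2)))⁻¹ * ∑' l : ℤ, q ^ (l ^ 2) * (z ^ 2 / q₁) ^ l := by
  have hq : q ≠ 0 := norm_pos_iff.1 hq0
  have ht : z ^ 2 / q₁ ≠ 0 := div_ne_zero (pow_ne_zero 2 hz) hq₁
  have hQ : ‖q ^ 2‖ < 1 := norm_sq_lt_one hq1
  have hfactor : ∀ i : ℕ,
      (1 + q ^ (2 * i + 1) * q₁ * (z ^ 2)⁻¹) * (1 + q ^ (2 * i + 1) * q₁⁻¹ * z ^ 2) =
        (1 + q ^ (2 * i + 1) * (z ^ 2 / q₁)⁻¹) * (1 + q ^ (2 * i + 1) * (z ^ 2 / q₁)) :=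
    fun i => by rw [inv_div]; ring
  have hpoch : ∀ k : ℕ, 1 - q ^ (2 * k + 2) = 1 - (q ^ 2) ^ (k + 1) := fun k => by ring
  have hjacobi := hasProd_jacobi_triple_product hq hq1 ht
  simp only [hfactor, hpoch]
  exact ⟨hjacobi.multipliable, multipliable_one_sub_pow_succ hQ,
    tprod_one_sub_pow_succ_ne_zero hQ, summable_norm_zpow_sq_mul_zpow hq1 _, hjacobi.tprod_eq⟩
end

section
/- Let q, u be complex numbers with 0 < |q| < 1 and u ≠ 0. Then Θ(u, q) and Θ(u/q, q) are not both zero, where Θ(u,q) = Σ_{l∈ℤ} q^{l²} u^l. Consequently, for q, q₁, q₂, z nonzero with q = q₁q₂ and 0 < |q| < 1, the pair (Σ_{l∈ℤ} q^{l²}(q₂z²)^l, Σ_{l∈ℤ} q^{l²}(z²/q₁)^l) is never (0,0). -/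
/-!
With `q = e^{πiτ}` and `u = e^{2πiz}` we have `Θ(u, q) = θ(z, τ)` and `Θ(u/q, q) = θ(z - τ/2, τ)`,
where `θ = jacobiTheta₂`. Splitting the double series of `θ(z, τ) θ(w, τ)` by the parity of
`m + n` expresses it through theta values at `2τ`. At a common zero `z` of `θ(·, τ)` and
`θ(· - τ/2, τ)` this gives a linear system for `θ(2z, 2τ)` and `θ(2z + τ, 2τ)` whose determinant
is a nonzero multiple of `θ(1/2, τ)²`, so `2z + τ` is a common zero for `2τ`. Doubling often
enough makes `im τ` large; then the common zeros, being `τ/2`-periodic, meet the strip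
`4 |im z| ≤ im τ`, where `θ` stays within distance `1` of `1`. The same doubling, applied to
`θ(0, τ) θ(1/2, τ) = θ(1/2, 2τ)²`, shows that `θ(1/2, τ)` never vanishes.
-/

/-- `Θ(u,q) = Σ_{l∈ℤ} q^{l²} u^l`. -/
noncomputable def Theta (u q : ℂ) : ℂ := ∑' l : ℤ, q ^ (l ^ 2) * u ^ l

open Complex Real

theorem HasSum.of_add_sub_of_add_add_one_sub {M : Type*} [AddCommMonoid M] [TopologicalSpace M]
    [ContinuousAdd M] {F : ℤ × ℤ → M} {a b : M}
    (h₀ : HasSum (fun p : ℤ × ℤ => F (p.1 + p.2, p.1 - p.2)) a)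
    (h₁ : HasSum (fun p : ℤ × ℤ => F (p.1 + p.2 + 1, p.1 - p.2)) b) :
    HasSum F (a + b) := by
  set g₀ : ℤ × ℤ → ℤ × ℤ := fun p => (p.1 + p.2, p.1 - p.2)
  set g₁ : ℤ × ℤ → ℤ × ℤ := fun p => (p.1 + p.2 + 1, p.1 - p.2)
  have hg₀ : Function.Injective g₀ := fun p p' h => by
    simp only [g₀, Prod.mk.injEq] at h; ext <;> omega
  have hg₁ : Function.Injective g₁ := fun p p' h => by
    simp only [g₁, Prod.mk.injEq] at h; ext <;> omega
  have hrange₀ : Set.range g₀ = {p | Even (p.1 + p.2)} := by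
    ext ⟨l, m⟩
    simp only [Set.mem_range, Set.mem_ofPred_eq, Prod.exists, g₀, Prod.mk.injEq]
    constructor
    · rintro ⟨a, b, rfl, rfl⟩; exact ⟨a, by ring⟩
    · rintro ⟨k, hk⟩; exact ⟨k, l - k, by omega, by omega⟩
  have hrange₁ : Set.range g₁ = {p | Even (p.1 + p.2)}ᶜ := by
    ext ⟨l, m⟩
    simp only [Set.mem_range, Set.mem_compl_iff, Set.mem_ofPred_eq, Int.not_even_iff_odd,
      Prod.exists, g₁, Prod.mk.injEq]
    constructor
    · rintro ⟨a, b, rfl, rfl⟩; exact ⟨a, by ring⟩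
    · rintro ⟨k, hk⟩; exact ⟨k, l - 1 - k, by omega, by omega⟩
  have hcompl : IsCompl (Set.range g₀) (Set.range g₁) := hrange₀ ▸ hrange₁ ▸ isCompl_compl
  exact (hg₀.hasSum_range_iff.mpr h₀).add_isCompl hcompl (hg₁.hasSum_range_iff.mpr h₁)

lemma hasSum_jacobiTheta₂_term_mul (z w : ℂ) {τ : ℂ} (hτ : 0 < im τ) :
    HasSum (fun p : ℤ × ℤ => jacobiTheta₂_term p.1 z τ * jacobiTheta₂_term p.2 w τ)
      (jacobiTheta₂ z τ * jacobiTheta₂ w τ) := by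
  have hsum := summable_mul_of_summable_norm ((summable_jacobiTheta₂_term_iff z τ).mpr hτ).norm
    ((summable_jacobiTheta₂_term_iff w τ).mpr hτ).norm
  exact HasSum.mul (f := (jacobiTheta₂_term · z τ)) (g := (jacobiTheta₂_term · w τ))
    (hasSum_jacobiTheta₂_term z hτ) (hasSum_jacobiTheta₂_term w hτ) hsum

theorem jacobiTheta₂_mul_jacobiTheta₂ (z w : ℂ) {τ : ℂ} (hτ : 0 < im τ) :
    jacobiTheta₂ z τ * jacobiTheta₂ w τ =
      jacobiTheta₂ (z + w) (2 * τ) * jacobiTheta₂ (z - w) (2 * τ) +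
        cexp (π * I * τ + 2 * π * I * z) *
          (jacobiTheta₂ (z + w + τ) (2 * τ) * jacobiTheta₂ (z - w + τ) (2 * τ)) := by
  have h2τ : 0 < im (2 * τ) := by simpa using hτ
  refine (hasSum_jacobiTheta₂_term_mul z w hτ).unique (.of_add_sub_of_add_add_one_sub ?_ ?_)
  · refine (hasSum_jacobiTheta₂_term_mul _ _ h2τ).congr_fun fun p => ?_
    simp only [jacobiTheta₂_term, ← Complex.exp_add]
    congr 1
    push_cast
    ring
  · refine ((hasSum_jacobiTheta₂_term_mul _ _ h2τ).mul_left _).congr_fun fun p => ?_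
    simp only [jacobiTheta₂_term, ← Complex.exp_add]
    congr 1
    push_cast
    ring

lemma jacobiTheta₂_add_half_two_mul_eq_zero (τ : ℂ) : jacobiTheta₂ (τ + 1 / 2) (2 * τ) = 0 := by
  -- evenness, 1-periodicity and quasi-periodicity give `θ(τ + 1/2, 2τ) = -θ(τ + 1/2, 2τ)`
  have h := jacobiTheta₂_add_left' (-(τ + 1 / 2)) (2 * τ)
  rw [show -(τ + 1 / 2) + 2 * τ = (τ + 1 / 2 - 1) by ring, ← jacobiTheta₂_add_left (τ + 1 / 2 - 1),
    sub_add_cancel, jacobiTheta₂_neg_left, show -π * I * (2 * τ + 2 * -(τ + 1 / 2)) = π * I by ring,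
    Complex.exp_pi_mul_I] at h
  linear_combination h / 2

lemma jacobiTheta₂_zero_mul_jacobiTheta₂_half {τ : ℂ} (hτ : 0 < im τ) :
    jacobiTheta₂ 0 τ * jacobiTheta₂ (1 / 2) τ = jacobiTheta₂ (1 / 2) (2 * τ) ^ 2 := by
  rw [jacobiTheta₂_mul_jacobiTheta₂ 0 (1 / 2) hτ, zero_add, zero_sub, jacobiTheta₂_neg_left,
    add_comm (1 / 2 : ℂ) τ, jacobiTheta₂_add_half_two_mul_eq_zero, zero_mul, mul_zero, add_zero, sq]

lemma jacobiTheta₂_half_sq {τ : ℂ} (hτ : 0 < im τ) :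
    jacobiTheta₂ (1 / 2) τ ^ 2 =
      jacobiTheta₂ 0 (2 * τ) ^ 2 - cexp (π * I * τ) * jacobiTheta₂ τ (2 * τ) ^ 2 := by
  have h_one : jacobiTheta₂ 1 (2 * τ) = jacobiTheta₂ 0 (2 * τ) := by
    simpa using jacobiTheta₂_add_left 0 (2 * τ)
  rw [sq, jacobiTheta₂_mul_jacobiTheta₂ _ _ hτ, sub_self, add_halves, add_comm 1 τ,
    jacobiTheta₂_add_left, h_one, show π * I * τ + 2 * π * I * (1 / 2) =
      π * I * τ + π * I by ring, Complex.exp_add, Complex.exp_pi_mul_I, zero_add]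
  ring

lemma norm_jacobiTheta₂_term_le_pow {τ : ℂ} (hτ : 0 ≤ im τ) (z : ℂ) (n : ℤ) :
    ‖jacobiTheta₂_term n z τ‖ ≤ rexp (-π * im τ + 2 * π * |im z|) ^ n.natAbs := by
  rw [norm_jacobiTheta₂_term, ← Real.exp_nat_mul, Real.exp_le_exp]
  have hsq : (n.natAbs : ℝ) ≤ (n : ℝ) ^ 2 := by
    simpa using (Int.cast_le (R := ℝ)).mpr (Int.natAbs_le_self_sq n)
  have hlin : -(n * im z) ≤ n.natAbs * |im z| := by
    rw [Nat.cast_natAbs, Int.cast_abs, ← abs_mul]; exact neg_le_abs _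
  nlinarith [mul_le_mul_of_nonneg_left hsq (mul_nonneg pi_pos.le hτ), pi_pos]

lemma norm_jacobiTheta₂_sub_one_le {τ : ℂ} (hτ : 0 < im τ) (z : ℂ)
    (hx : rexp (-π * im τ + 2 * π * |im z|) < 1) :
    ‖jacobiTheta₂ z τ - 1‖ ≤
      2 * (rexp (-π * im τ + 2 * π * |im z|) / (1 - rexp (-π * im τ + 2 * π * |im z|))) := by
  set x := rexp (-π * im τ + 2 * π * |im z|)
  set f : ℤ → ℂ := (jacobiTheta₂_term · z τ)
  have hsum : Summable f := (summable_jacobiTheta₂_term_iff z τ).mpr hτ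
  have hpos : Summable fun n : ℕ => f (n + 1) :=
    hsum.comp_injective (i := fun n : ℕ => (n + 1 : ℤ)) fun m n h => by simpa using h
  have hneg : Summable fun n : ℕ => f (-(n + 1)) :=
    hsum.comp_injective (i := fun n : ℕ => (-(n + 1) : ℤ)) fun m n h => by simpa using h
  have hgeom : HasSum (fun n : ℕ => x ^ (n + 1)) (x / (1 - x)) := by
    simpa only [pow_succ', div_eq_mul_inv] using
      (hasSum_geometric_of_lt_one (Real.exp_nonneg _) hx).mul_left x
  have hbound (m : ℤ) (n : ℕ) (hm : m.natAbs = n + 1) : ‖f m‖ ≤ x ^ (n + 1) :=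
    hm ▸ norm_jacobiTheta₂_term_le_pow hτ.le z m
  have hpos_le : ‖∑' n : ℕ, f (n + 1)‖ ≤ x / (1 - x) :=
    tsum_of_norm_bounded hgeom fun n => hbound _ n (by omega)
  have hneg_le : ‖∑' n : ℕ, f (-(n + 1))‖ ≤ x / (1 - x) :=
    tsum_of_norm_bounded hgeom fun n => hbound _ n (by omega)
  have hf0 : f 0 = 1 := by simp [f, jacobiTheta₂_term]
  calc ‖jacobiTheta₂ z τ - 1‖ = ‖(∑' n : ℕ, f (n + 1)) + ∑' n : ℕ, f (-(n + 1))‖ := by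
        rw [jacobiTheta₂, tsum_of_add_one_of_neg_add_one hpos hneg, hf0, add_sub_right_comm,
          add_sub_cancel_right]
    _ ≤ 2 * (x / (1 - x)) := (norm_add_le _ _).trans (by linarith)

lemma jacobiTheta₂_ne_zero_of_four_mul_abs_im_le {z τ : ℂ} (hτ : 2 ≤ im τ)
    (hz : 4 * |im z| ≤ im τ) : jacobiTheta₂ z τ ≠ 0 := by
  set x := rexp (-π * im τ + 2 * π * |im z|)
  have hx : x < 1 / 3 := by
    have hexp_pi : π + 1 ≤ rexp π := by linarith [Real.add_one_le_exp π]
    calc x ≤ rexp (-π) := Real.exp_le_exp.mpr (by nlinarith [pi_pos])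
      _ = (rexp π)⁻¹ := Real.exp_neg π
      _ < 1 / 3 := by
        rw [inv_lt_comm₀ (Real.exp_pos π) (by norm_num)]; linarith [pi_gt_three]
  have hx0 : 0 ≤ x := Real.exp_nonneg _
  have hclose : ‖jacobiTheta₂ z τ - 1‖ < 1 := by
    refine (norm_jacobiTheta₂_sub_one_le (by linarith) z (by linarith)).trans_lt ?_
    rw [← mul_div_assoc, div_lt_one (by linarith)]
    linarith
  intro h
  simp [h] at hclose

lemma not_of_le_im_of_two_mul {P : ℂ → Prop} (T : ℝ) (hlarge : ∀ τ : ℂ, T ≤ im τ → ¬P τ)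
    (hdouble : ∀ τ : ℂ, 0 < im τ → P τ → P (2 * τ)) {τ : ℂ} (hτ : 0 < im τ) : ¬P τ := by
  have hiter (n : ℕ) (hP : P τ) : P (2 ^ n * τ) ∧ 0 < im (2 ^ n * τ) := by
    induction n with
    | zero => simpa using ⟨hP, hτ⟩
    | succ n ih =>
      rw [pow_succ', mul_assoc]
      exact ⟨hdouble _ ih.2 ih.1, by simpa using ih.2⟩
  obtain ⟨n, hn⟩ := pow_unbounded_of_one_lt (T / im τ) one_lt_two
  refine fun hP => hlarge _ ?_ (hiter n hP).1
  have him : im (2 ^ n * τ) = 2 ^ n * im τ := by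
    rw [← ofReal_ofNat, ← ofReal_pow, im_ofReal_mul]
  rw [him, ← div_le_iff₀ hτ]
  exact hn.le

lemma jacobiTheta₂_half_ne_zero {τ : ℂ} (hτ : 0 < im τ) : jacobiTheta₂ (1 / 2) τ ≠ 0 := by
  refine not_of_le_im_of_two_mul (P := (jacobiTheta₂ (1 / 2) · = 0)) 2
    (fun τ hτ => jacobiTheta₂_ne_zero_of_four_mul_abs_im_le hτ
      (by simpa using zero_le_two.trans hτ)) ?_ hτ
  intro τ hτ h
  have h2 := jacobiTheta₂_zero_mul_jacobiTheta₂_half hτ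
  rwa [h, mul_zero, eq_comm, pow_eq_zero_iff two_ne_zero] at h2

lemma jacobiTheta₂_add_eq_zero_iff (z τ : ℂ) :
    jacobiTheta₂ (z + τ) τ = 0 ↔ jacobiTheta₂ z τ = 0 := by
  rw [jacobiTheta₂_add_left', mul_eq_zero, or_iff_right (Complex.exp_ne_zero _)]

lemma periodic_jacobiTheta₂_commonZero (τ : ℂ) :
    Function.Periodic (fun z => jacobiTheta₂ z τ = 0 ∧ jacobiTheta₂ (z - τ / 2) τ = 0) (τ / 2) :=
  fun z => by
    beta_reduce
    rw [add_sub_cancel_right, show z + τ / 2 = z - τ / 2 + τ by ring,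
      jacobiTheta₂_add_eq_zero_iff, and_comm]

lemma exists_int_abs_add_mul_le_half (y : ℝ) {t : ℝ} (ht : 0 < t) :
    ∃ m : ℤ, |y + m * t| ≤ t / 2 := by
  refine ⟨-round (y / t), ?_⟩
  have h : y + ((-round (y / t) : ℤ) : ℝ) * t = (y / t - round (y / t)) * t := by
    push_cast
    field_simp
    ring
  rw [h, abs_mul, abs_of_pos ht]
  linarith [mul_le_mul_of_nonneg_right (abs_sub_round (y / t)) ht.le]

lemma not_jacobiTheta₂_commonZero_of_two_le_im {τ : ℂ} (hτ : 2 ≤ im τ) (z : ℂ) :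
    ¬(jacobiTheta₂ z τ = 0 ∧ jacobiTheta₂ (z - τ / 2) τ = 0) := by
  obtain ⟨m, hm⟩ := exists_int_abs_add_mul_le_half (im z) (t := im τ / 2) (by linarith)
  intro h
  have h' := ((periodic_jacobiTheta₂_commonZero τ).int_mul m z).mpr h
  refine jacobiTheta₂_ne_zero_of_four_mul_abs_im_le hτ ?_ h'.1
  have him : im (z + m * (τ / 2)) = im z + m * (im τ / 2) := by simp
  rw [him]
  linarith

lemma jacobiTheta₂_two_mul_sub (z τ : ℂ) :
    jacobiTheta₂ (2 * z - τ) (2 * τ) =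
      cexp (2 * π * I * z) ^ 2 * jacobiTheta₂ (2 * z + τ) (2 * τ) := by
  have h := jacobiTheta₂_add_left' (2 * z - τ) (2 * τ)
  rw [show 2 * z - τ + 2 * τ = 2 * z + τ by ring,
    show -π * I * (2 * τ + 2 * (2 * z - τ)) = -(2 * π * I * z + 2 * π * I * z) by ring,
    Complex.exp_neg, Complex.exp_add, ← sq] at h
  rw [h, ← mul_assoc, mul_inv_cancel₀ (pow_ne_zero 2 (Complex.exp_ne_zero _)), one_mul]

lemma jacobiTheta₂_commonZero_two_mul {z τ : ℂ} (hτ : 0 < im τ) (h₁ : jacobiTheta₂ z τ = 0)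
    (h₂ : jacobiTheta₂ (z - τ / 2) τ = 0) :
    jacobiTheta₂ (2 * z + τ) (2 * τ) = 0 ∧ jacobiTheta₂ (2 * z + τ - 2 * τ / 2) (2 * τ) = 0 := by
  rw [show 2 * z + τ - 2 * τ / 2 = 2 * z by ring]
  set X := jacobiTheta₂ (2 * z) (2 * τ)
  set Y := jacobiTheta₂ (2 * z + τ) (2 * τ)
  set α := jacobiTheta₂ 0 (2 * τ)
  set β := jacobiTheta₂ τ (2 * τ)
  set q := cexp (π * I * τ)
  set c := cexp (2 * π * I * z)
  have hc : c ≠ 0 := Complex.exp_ne_zero _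
  have hD : α ^ 2 - q * β ^ 2 ≠ 0 := by
    rw [← jacobiTheta₂_half_sq hτ]; exact pow_ne_zero 2 (jacobiTheta₂_half_ne_zero hτ)
  have hE₁ : X * α + q * c * (Y * β) = 0 := by
    have h := jacobiTheta₂_mul_jacobiTheta₂ z z hτ
    rw [h₁, zero_mul, sub_self, ← two_mul, zero_add, Complex.exp_add] at h
    exact h.symm
  have hE₂ : c ^ 2 * Y * α + c * (X * β) = 0 := by
    have h := jacobiTheta₂_mul_jacobiTheta₂ (z - τ / 2) (z - τ / 2) hτ
    rw [h₂, zero_mul, sub_self, ← two_mul, show 2 * (z - τ / 2) = 2 * z - τ by ring,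
      show 2 * z - τ + τ = 2 * z by ring, zero_add, jacobiTheta₂_two_mul_sub,
      show π * I * τ + 2 * π * I * (z - τ / 2) = 2 * π * I * z by ring] at h
    exact h.symm
  constructor
  · have : c ^ 2 * Y * (α ^ 2 - q * β ^ 2) = 0 := by
      linear_combination α * hE₂ - c * β * hE₁
    simpa [hc, hD] using this
  · have : c * X * (α ^ 2 - q * β ^ 2) = 0 := by
      linear_combination c * α * hE₁ - q * β * hE₂
    simpa [hc, hD] using this

theorem not_jacobiTheta₂_commonZero {τ : ℂ} (hτ : 0 < im τ) (z : ℂ) :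
    ¬(jacobiTheta₂ z τ = 0 ∧ jacobiTheta₂ (z - τ / 2) τ = 0) := by
  refine fun hz => not_of_le_im_of_two_mul
    (P := fun τ => ∃ z, jacobiTheta₂ z τ = 0 ∧ jacobiTheta₂ (z - τ / 2) τ = 0) 2
    (fun τ hτ ⟨z, hz⟩ => not_jacobiTheta₂_commonZero_of_two_le_im hτ z hz) ?_ hτ ⟨z, hz⟩
  rintro τ hτ ⟨z, h₁, h₂⟩
  exact ⟨2 * z + τ, jacobiTheta₂_commonZero_two_mul hτ h₁ h₂⟩

lemma theta_exp_exp (z τ : ℂ) :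
    Theta (cexp (2 * π * I * z)) (cexp (π * I * τ)) = jacobiTheta₂ z τ := by
  refine tsum_congr fun n => ?_
  rw [← Complex.exp_int_mul, ← Complex.exp_int_mul, ← Complex.exp_add, jacobiTheta₂_term]
  push_cast
  ring_nf

lemma exists_im_pos_exp_pi_I_mul_eq {q : ℂ} (hq₀ : 0 < ‖q‖) (hq₁ : ‖q‖ < 1) :
    ∃ τ : ℂ, 0 < im τ ∧ cexp (π * I * τ) = q := by
  have hπI : (π : ℂ) * I ≠ 0 := mul_ne_zero (ofReal_ne_zero.mpr pi_ne_zero) I_ne_zero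
  refine ⟨log q / (π * I), ?_, ?_⟩
  · have him : im (log q / (π * I)) = -Real.log ‖q‖ / π := by
      rw [div_mul_eq_div_div, div_I, neg_im, mul_I_im, div_ofReal_re, log_re, neg_div]
    rw [him]
    exact div_pos (neg_pos.mpr (Real.log_neg hq₀ hq₁)) pi_pos
  · rw [mul_div_cancel₀ _ hπI, exp_log (norm_pos_iff.mp hq₀)]

lemma exists_exp_two_pi_I_mul_eq {u : ℂ} (hu : u ≠ 0) : ∃ z : ℂ, cexp (2 * π * I * z) = u := by
  have h2πI : 2 * (π : ℂ) * I ≠ 0 := by simp [pi_ne_zero]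
  exact ⟨log u / (2 * π * I), by rw [mul_div_cancel₀ _ h2πI, exp_log hu]⟩

/-- For `0 < |q| < 1` and `u ≠ 0`, `Θ(u, q)` and `Θ(u/q, q)` are not both zero.
Consequently, for nonzero `q, q₁, q₂, z` with `q = q₁q₂` and `0 < |q| < 1`, the pair
`(Σ_{l∈ℤ} q^{l²}(q₂z²)^l, Σ_{l∈ℤ} q^{l²}(z²/q₁)^l)` is never `(0,0)`. -/
theorem theta_no_common_zero :
    (∀ q u : ℂ, 0 < ‖q‖ → ‖q‖ < 1 → u ≠ 0 →
      ¬(Theta u q = 0 ∧ Theta (u / q) q = 0)) ∧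
    (∀ q q₁ q₂ z : ℂ, q ≠ 0 → q₁ ≠ 0 → q₂ ≠ 0 → z ≠ 0 → q = q₁ * q₂ → 0 < ‖q‖ → ‖q‖ < 1 →
      ¬((∑' l : ℤ, q ^ (l ^ 2) * (q₂ * z ^ 2) ^ l) = 0 ∧
        (∑' l : ℤ, q ^ (l ^ 2) * (z ^ 2 / q₁) ^ l) = 0)) := by
  have hTheta : ∀ q u : ℂ, 0 < ‖q‖ → ‖q‖ < 1 → u ≠ 0 →
      ¬(Theta u q = 0 ∧ Theta (u / q) q = 0) := by
    intro q u hq₀ hq₁ hu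
    obtain ⟨τ, hτ, rfl⟩ := exists_im_pos_exp_pi_I_mul_eq hq₀ hq₁
    obtain ⟨z, rfl⟩ := exists_exp_two_pi_I_mul_eq hu
    have hshift : cexp (2 * π * I * z) / cexp (π * I * τ) = cexp (2 * π * I * (z - τ / 2)) := by
      rw [← Complex.exp_sub]; ring_nf
    rw [hshift, theta_exp_exp, theta_exp_exp]
    exact not_jacobiTheta₂_commonZero hτ z
  refine ⟨hTheta, fun q q₁ q₂ z _ _ hq₂ hz hq hq₀ hq₁ => ?_⟩
  have hu : (q₂ * z ^ 2) / q = z ^ 2 / q₁ := by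
    rw [hq, mul_comm q₁, mul_div_mul_left _ _ hq₂]
  simpa only [Theta, hu] using hTheta q (q₂ * z ^ 2) hq₀ hq₁ (mul_ne_zero hq₂ (pow_ne_zero 2 hz))
end

section
/- Let T = [[1,1],[0,1]] ∈ SL₂(ℤ), and let M₁, …, M_k ∈ SL₂(ℤ) be matrices each of which is conjugate in SL₂(ℤ) to T. If M₁·M₂·⋯·M_k equals the identity matrix, then 12 divides k. -/
/-!
Every character `χ` of `SL₂(ℤ)` with values in an abelian group is constant on conjugacy classes,
so a trivial product of `k` conjugates of `T` gives `χ T ^ k = 1`, i.e. `orderOf (χ T) ∣ k`.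
The abelianization of `SL₂(ℤ)` is `ℤ/12`, generated by the image of `T`; it suffices to realise
its two primary parts as characters `SL₂(ℤ) → SL₂(ℤ/3) → ℤ/3` and `SL₂(ℤ) → SL₂(ℤ/4) → ℤ/4`
sending `T` to `1`. These are written down as polynomials in the matrix entries, and
multiplicativity is checked over the finite rings.
-/

open Matrix

theorem orderOf_map_dvd_length_of_isConj {G A : Type*} [Group G] [CommGroup A] (χ : G →* A)
    {T : G} {l : List G} (hl : ∀ g ∈ l, IsConj T g) (hprod : l.prod = 1) :
    orderOf (χ T) ∣ l.length := by
  have hconst : ∀ a ∈ l.map χ, a = χ T := by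
    simp only [List.mem_map, forall_exists_index, and_imp, forall_apply_eq_imp_iff₂]
    exact fun g hg => (isConj_iff_eq.mp (χ.map_isConj (hl g hg))).symm
  have hpow : χ T ^ l.length = 1 := by
    rw [← List.length_map (f := χ), ← List.prod_eq_pow_card _ _ hconst, ← map_list_prod, hprod,
      map_one]
  exact orderOf_dvd_of_pow_eq_one hpow

theorem dvd_length_of_isConj {G : Type*} [Group G] {n : ℕ} (χ : G →* Multiplicative (ZMod n))
    {T : G} (hχ : χ T = Multiplicative.ofAdd 1) {l : List G} (hl : ∀ g ∈ l, IsConj T g)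
    (hprod : l.prod = 1) : n ∣ l.length := by
  simpa [hχ, orderOf_ofAdd_eq_addOrderOf] using orderOf_map_dvd_length_of_isConj χ hl hprod

namespace Matrix.SpecialLinearGroup

def AddsOverProductsOfDetOne {R A : Type*} [CommRing R] [Add A] (f : R → R → R → R → A) : Prop :=
  ∀ a b c d a' b' c' d' : R, a * d - b * c = 1 → a' * d' - b' * c' = 1 →
    f (a * a' + b * c') (a * b' + b * d') (c * a' + d * c') (c * b' + d * d')
      = f a b c d + f a' b' c' d'

def finTwoHomOfEntries {R A : Type*} [CommRing R] [AddCommMonoid A] (f : R → R → R → R → A)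
    (hone : f 1 0 0 1 = 0) (hmul : AddsOverProductsOfDetOne f) :
    SpecialLinearGroup (Fin 2) R →* Multiplicative A where
  toFun g := Multiplicative.ofAdd (f (g 0 0) (g 0 1) (g 1 0) (g 1 1))
  map_one' := by simpa using congrArg Multiplicative.ofAdd hone
  map_mul' g g' := by
    have hg := g.2
    have hg' := g'.2
    rw [det_fin_two] at hg hg'
    simp only [coe_mul, mul_apply, Fin.sum_univ_two]
    rw [hmul _ _ _ _ _ _ _ _ hg hg']
    rfl

theorem dvd_length_of_prod_isConj_upperUnitriangular {n : ℕ}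
    (f : ZMod n → ZMod n → ZMod n → ZMod n → ZMod n) (hone : f 1 0 0 1 = 0)
    (hmul : AddsOverProductsOfDetOne f) (hfT : f 1 1 0 1 = 1) {T : SpecialLinearGroup (Fin 2) ℤ}
    (hT : (T : Matrix (Fin 2) (Fin 2) ℤ) = !![1, 1; 0, 1])
    {l : List (SpecialLinearGroup (Fin 2) ℤ)}
    (hl : ∀ g ∈ l, IsConj T g) (hprod : l.prod = 1) : n ∣ l.length := by
  refine dvd_length_of_isConj ((finTwoHomOfEntries f hone hmul).comp (map (Int.castRingHom _)))
    ?_ hl hprod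
  simp [finTwoHomOfEntries, hT, hfT]

end Matrix.SpecialLinearGroup

open Matrix.SpecialLinearGroup

def charEntriesZModThree (a b c d : ZMod 3) : ZMod 3 :=
  a * c + b * d + c * d + 2 * b * c ^ 2 * d

def charEntriesZModFour (a b c d : ZMod 4) : ZMod 4 :=
  1 + 3 * d + 2 * c + b * d + b * c + b * c * d + b * c ^ 2 + a * c

theorem charEntriesZModThree_mul : AddsOverProductsOfDetOne charEntriesZModThree := by
  unfold AddsOverProductsOfDetOne
  decide

set_option maxHeartbeats 8000000 in
theorem charEntriesZModFour_mul : AddsOverProductsOfDetOne charEntriesZModFour := by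
  unfold AddsOverProductsOfDetOne
  decide

/-- The '12 property': if `M₁, …, M_k ∈ SL₂(ℤ)` are each conjugate in `SL₂(ℤ)` to
`T = [[1,1],[0,1]]` and `M₁·M₂·⋯·M_k = 1`, then `12 ∣ k`. -/
theorem twelve_property (k : ℕ) (M : Fin k → Matrix.SpecialLinearGroup (Fin 2) ℤ)
    (T : Matrix.SpecialLinearGroup (Fin 2) ℤ)
    (hT : (T : Matrix (Fin 2) (Fin 2) ℤ) = !![1, 1; 0, 1])
    (hM : ∀ i, IsConj T (M i))
    (hprod : (List.ofFn M).prod = 1) : 12 ∣ k := by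
  have hl : ∀ g ∈ List.ofFn M, IsConj T g := by
    simpa only [List.mem_ofFn, forall_exists_index, forall_apply_eq_imp_iff] using hM
  have h3 := dvd_length_of_prod_isConj_upperUnitriangular charEntriesZModThree (by decide)
    charEntriesZModThree_mul (by decide) hT hl hprod
  have h4 := dvd_length_of_prod_isConj_upperUnitriangular charEntriesZModFour (by decide)
    charEntriesZModFour_mul (by decide) hT hl hprod
  rw [List.length_ofFn] at h3 h4
  omega
end
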